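/- For any graphs G and H of orders n_1 and n_2, n_1 n_2 / gp(G □ H) ≤ χ_gp(G □ H) ≤ min{ n_1 · χ_gp(H), n_2 · χ_gp(G) }. -/

import Mathlib

open SimpleGraph

/-- A set `S` is in general position: no shortest path contains more than two vertices of `S`. -/
def IsGenPosSet {V : Type*} (G : SimpleGraph V) (S : Set V) : Prop :=
  ∀ ⦃u v : V⦄ (p : G.Walk u v), p.IsPath → p.length = G.dist u v →
    ∀ x y z, x ∈ S → y ∈ S → z ∈ S →
      x ∈ p.support → y ∈ p.support → z ∈ p.support →
      x = y ∨ y = z ∨ x = z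

/-- `G` can be coloured with `k` colours so that every colour class is in general position. -/
def GpColorable {V : Type*} (G : SimpleGraph V) (k : ℕ) : Prop :=
  ∃ c : V → Fin k, ∀ i, IsGenPosSet G {v | c v = i}

/-- The gp-chromatic number: least number of colours in a colouring whose classes are
general position sets. -/
noncomputable def gpChromatic {V : Type*} (G : SimpleGraph V) : ℕ :=
  sInf {k | GpColorable G k}

/-- The general position number of `G`: largest size of a general position set. -/
noncomputable def gpNumber {V : Type*} (G : SimpleGraph V) : ℕ :=
  sSup {k | ∃ S : Set V, IsGenPosSet G S ∧ S.ncard = k}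

/-!
Colouring the vertices of a graph by general position sets of size at most `gp` needs at least
`|V| / gp` colours, which is the lower bound. For the upper bound, colour `(a, b)` by the pair
`(b, c a)` for a gp-colouring `c` of `G`: each colour class `{a | c a = i} × {b}` lies in a single
`G`-layer, and a shortest path of `G □ H` projects onto a shortest path of `G` (distances in
`G □ H` add up coordinatewise), so the class is in general position. Symmetrically for `H`.
-/

namespace SimpleGraph

variable {α β : Type*} {G : SimpleGraph α} {H : SimpleGraph β}

lemma dist_boxProd {x y : α × β} (h : (G □ H).Reachable x y) :
    (G □ H).dist x y = G.dist x.1 y.1 + H.dist x.2 y.2 := by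
  obtain ⟨hG, hH⟩ := reachable_boxProd.mp h
  rw [dist, dist, dist, edist_boxProd, ENat.toNat_add (edist_ne_top_iff_reachable.mpr hG)
    (edist_ne_top_iff_reachable.mpr hH)]

namespace Walk

theorem fst_mem_support_ofBoxProdLeft [DecidableEq β] [DecidableRel G.Adj] {x y : α × β}
    (p : (G □ H).Walk x y) {z : α × β} (hz : z ∈ p.support) :
    z.1 ∈ p.ofBoxProdLeft.support := by
  induction p with
  | nil => simp_all [ofBoxProdLeft]
  | @cons u v w h p ih =>
    rw [support_cons, List.mem_cons] at hz
    obtain rfl | hz := hz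
    · exact start_mem_support _
    unfold ofBoxProdLeft Or.by_cases
    split_ifs with hG
    · exact List.mem_cons_of_mem _ (ih hz)
    · obtain ⟨a, b⟩ := u
      obtain ⟨c, d⟩ := v
      obtain ⟨_, rfl : a = c⟩ := h.resolve_left hG
      exact ih hz

theorem snd_mem_support_ofBoxProdRight [DecidableEq α] [DecidableRel H.Adj] {x y : α × β}
    (p : (G □ H).Walk x y) {z : α × β} (hz : z ∈ p.support) :
    z.2 ∈ p.ofBoxProdRight.support := by
  induction p with
  | nil => simp_all [ofBoxProdRight]
  | @cons u v w h p ih =>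
    rw [support_cons, List.mem_cons] at hz
    obtain rfl | hz := hz
    · exact start_mem_support _
    unfold ofBoxProdRight Or.by_cases
    split_ifs with hH
    · exact List.mem_cons_of_mem _ (ih hz)
    · obtain ⟨a, b⟩ := u
      obtain ⟨c, d⟩ := v
      obtain ⟨_, rfl : b = d⟩ := h.resolve_right hH
      exact ih hz

variable [DecidableEq α] [DecidableEq β] [DecidableRel G.Adj] [DecidableRel H.Adj]

theorem length_ofBoxProdLeft_eq_dist {x y : α × β} (p : (G □ H).Walk x y)
    (hp : p.length = (G □ H).dist x y) : p.ofBoxProdLeft.length = G.dist x.1 y.1 := by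
  obtain ⟨a, b⟩ := x
  obtain ⟨a', b'⟩ := y
  rw [dist_boxProd ⟨p⟩, length_boxProd] at hp
  have := dist_le p.ofBoxProdLeft
  have := dist_le p.ofBoxProdRight
  omega

theorem length_ofBoxProdRight_eq_dist {x y : α × β} (p : (G □ H).Walk x y)
    (hp : p.length = (G □ H).dist x y) : p.ofBoxProdRight.length = H.dist x.2 y.2 := by
  obtain ⟨a, b⟩ := x
  obtain ⟨a', b'⟩ := y
  rw [dist_boxProd ⟨p⟩, length_boxProd] at hp
  have := dist_le p.ofBoxProdLeft
  have := dist_le p.ofBoxProdRight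
  omega

end Walk

end SimpleGraph

section GeneralPosition

variable {V α β : Type*} {G : SimpleGraph V} {k : ℕ}

lemma IsGenPosSet.of_subsingleton {S : Set V} (hS : S.Subsingleton) : IsGenPosSet G S :=
  fun _ _ _ _ _ _ _ _ hx hy _ _ _ _ => Or.inl (hS hx hy)

lemma IsGenPosSet.prod_singleton {G : SimpleGraph α} {S : Set α} (hS : IsGenPosSet G S)
    (H : SimpleGraph β) (b : β) : IsGenPosSet (G □ H) (S ×ˢ {b}) := by
  classical
  intro _ _ p _ hp x y z hx hy hz hxp hyp hzp
  have hq := p.length_ofBoxProdLeft_eq_dist hp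
  have inj : Set.InjOn Prod.fst (S ×ˢ {b}) := fun x hx y hy h => Prod.ext h (hx.2.trans hy.2.symm)
  exact (hS _ (p.ofBoxProdLeft.isPath_of_length_eq_dist hq) hq _ _ _ hx.1 hy.1 hz.1
    (p.fst_mem_support_ofBoxProdLeft hxp) (p.fst_mem_support_ofBoxProdLeft hyp)
    (p.fst_mem_support_ofBoxProdLeft hzp)).imp (inj hx hy) (.imp (inj hy hz) (inj hx hz))

lemma IsGenPosSet.singleton_prod {H : SimpleGraph β} {T : Set β} (hT : IsGenPosSet H T)
    (G : SimpleGraph α) (a : α) : IsGenPosSet (G □ H) ({a} ×ˢ T) := by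
  classical
  intro _ _ p _ hp x y z hx hy hz hxp hyp hzp
  have hq := p.length_ofBoxProdRight_eq_dist hp
  have inj : Set.InjOn Prod.snd ({a} ×ˢ T) := fun x hx y hy h => Prod.ext (hx.1.trans hy.1.symm) h
  exact (hT _ (p.ofBoxProdRight.isPath_of_length_eq_dist hq) hq _ _ _ hx.2 hy.2 hz.2
    (p.snd_mem_support_ofBoxProdRight hxp) (p.snd_mem_support_ofBoxProdRight hyp)
    (p.snd_mem_support_ofBoxProdRight hzp)).imp (inj hx hy) (.imp (inj hy hz) (inj hx hz))

lemma ncard_le_gpNumber [Finite V] {S : Set V} (hS : IsGenPosSet G S) : S.ncard ≤ gpNumber G :=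
  le_csSup ⟨Nat.card V, by rintro _ ⟨T, -, rfl⟩; exact Set.ncard_le_card T⟩ ⟨S, hS, rfl⟩

lemma gpColorable_of_forall_isGenPosSet_fiber {ι : Type*} [Fintype ι] (c : V → ι)
    (hc : ∀ i, IsGenPosSet G {v | c v = i}) : GpColorable G (Fintype.card ι) :=
  ⟨Fintype.equivFin ι ∘ c, fun i => by
    simpa [← Equiv.eq_symm_apply] using hc ((Fintype.equivFin ι).symm i)⟩

lemma gpChromatic_le (h : GpColorable G k) : gpChromatic G ≤ k :=
  Nat.sInf_le h

lemma gpColorable_gpChromatic [Fintype V] (G : SimpleGraph V) : GpColorable G (gpChromatic G) :=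
  Nat.sInf_mem (s := {k | GpColorable G k})
    ⟨_, gpColorable_of_forall_isGenPosSet_fiber id fun _ =>
      .of_subsingleton Set.subsingleton_singleton⟩

lemma GpColorable.card_le_mul_gpNumber [Fintype V] (h : GpColorable G k) :
    Fintype.card V ≤ k * gpNumber G := by
  classical
  obtain ⟨c, hc⟩ := h
  have := Finset.card_le_mul_card_image_of_maps_to (s := .univ) (t := .univ)
    (fun v _ => Finset.mem_univ (c v)) (gpNumber G) fun i _ => by
      simpa [Set.ncard_eq_toFinset_card'] using ncard_le_gpNumber (hc i)
  simpa [mul_comm] using this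

lemma GpColorable.boxProd_left [Fintype β] {G : SimpleGraph α} (h : GpColorable G k)
    (H : SimpleGraph β) : GpColorable (G □ H) (Fintype.card β * k) := by
  obtain ⟨c, hc⟩ := h
  simpa using gpColorable_of_forall_isGenPosSet_fiber (fun p : α × β => (p.2, c p.1))
    fun ⟨b, i⟩ => by
      convert (hc i).prod_singleton H b using 1
      ext; simp [and_comm]

lemma GpColorable.boxProd_right [Fintype α] {H : SimpleGraph β} (h : GpColorable H k)
    (G : SimpleGraph α) : GpColorable (G □ H) (Fintype.card α * k) := by
  obtain ⟨c, hc⟩ := h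
  simpa using gpColorable_of_forall_isGenPosSet_fiber (fun p : α × β => (p.1, c p.2))
    fun ⟨a, i⟩ => by
      convert (hc i).singleton_prod G a using 1
      ext; simp

end GeneralPosition

/-- `n₁n₂ / gp(G □ H) ≤ χ_gp(G □ H) ≤ min (n₁ χ_gp(H)) (n₂ χ_gp(G))`. -/
theorem gpChromatic_boxProd_bounds {α β : Type*} [Fintype α] [Fintype β]
    (G : SimpleGraph α) (H : SimpleGraph β) :
    Fintype.card α * Fintype.card β ≤ gpChromatic (G □ H) * gpNumber (G □ H) ∧
      gpChromatic (G □ H) ≤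
        min (Fintype.card α * gpChromatic H) (Fintype.card β * gpChromatic G) := by
  refine ⟨?_, le_min ?_ ?_⟩
  · rw [← Fintype.card_prod]
    exact (gpColorable_gpChromatic _).card_le_mul_gpNumber
  · exact gpChromatic_le ((gpColorable_gpChromatic H).boxProd_right G)
  · exact gpChromatic_le ((gpColorable_gpChromatic G).boxProd_left H)
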